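/- Let s₁,…,s_m be bucket sizes and let L₀ ≥ max_i sᵢ be a bound for which the scanning algorithm succeeds with at most r groups. Then for every L ≥ L₀ the scanning algorithm with bound L also succeeds with at most r groups; moreover, for every i, the first i groups formed by the scanning algorithm with bound L together contain at least as many buckets as the first i groups formed by the scanning algorithm with bound L₀. -/
import Mathlib


/-- The length of the longest prefix of `s` whose sum is at most `L`. -/
def greedyLen (L : ℕ) (s : List ℕ) : ℕ :=
  ((List.range (s.length + 1)).filter (fun j => (s.take j).sum ≤ L)).foldr max 0

/-- The scanning (greedy) algorithm: repeatedly take as the next group the longest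
prefix of the remaining buckets whose total size is at most `L`. -/
def scanGroups (L : ℕ) : List ℕ → List (List ℕ)
  | [] => []
  | a :: t =>
      (a :: t).take (max 1 (greedyLen L (a :: t))) ::
        scanGroups L ((a :: t).drop (max 1 (greedyLen L (a :: t))))
  termination_by s => s.length
  decreasing_by
    simp only [List.length_drop, List.length_cons]
    omega

/-- total number consumed after `n` steps (counting phantom steps after exhaustion) -/
def posN (L : ℕ) (s : List ℕ) : ℕ → ℕ
  | 0 => 0
  | n + 1 => posN L s n + max 1 (greedyLen L (s.drop (posN L s n)))

lemma posN_succ_shift (L : ℕ) (a : ℕ) (t : List ℕ) (n : ℕ) :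
    posN L (a :: t) (n + 1) =
      max 1 (greedyLen L (a :: t)) +
        posN L ((a :: t).drop (max 1 (greedyLen L (a :: t)))) n := by
  induction n with
  | zero => simp [posN]
  | succ n ih =>
    rw [posN, ih, posN]
    have : (a :: t).drop (max 1 (greedyLen L (a :: t)) +
        posN L ((a :: t).drop (max 1 (greedyLen L (a :: t)))) n) =
        ((a :: t).drop (max 1 (greedyLen L (a :: t)))).drop
          (posN L ((a :: t).drop (max 1 (greedyLen L (a :: t)))) n) := by
      rw [List.drop_drop, Nat.add_comm]
    rw [this]; ring

lemma foldr_max_le {l : List ℕ} {B : ℕ} (h : ∀ x ∈ l, x ≤ B) : l.foldr max 0 ≤ B := by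
  induction l with
  | nil => simp
  | cons a t ih => simp_all [Nat.max_le]

lemma le_foldr_max {l : List ℕ} {x : ℕ} (h : x ∈ l) : x ≤ l.foldr max 0 := by
  induction l with
  | nil => simp at h
  | cons a t ih =>
    simp only [List.mem_cons] at h
    rcases h with rfl | h
    · simp
    · have := ih h; simp; omega

lemma foldr_max_mem_or (l : List ℕ) : l.foldr max 0 = 0 ∨ l.foldr max 0 ∈ l := by
  induction l with
  | nil => simp
  | cons a t ih =>
    simp only [List.foldr_cons]
    rcases Nat.le_total a (t.foldr max 0) with h | h
    · rw [max_eq_right h]; rcases ih with h0 | hm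
      · left; omega
      · right; simp [hm]
    · rw [max_eq_left h]; right; simp

lemma greedyLen_le_length (L : ℕ) (s : List ℕ) : greedyLen L s ≤ s.length := by
  apply foldr_max_le
  intro x hx
  simp only [List.mem_filter, List.mem_range] at hx
  omega

lemma le_greedyLen {L j : ℕ} {s : List ℕ} (h1 : j ≤ s.length) (h2 : (s.take j).sum ≤ L) :
    j ≤ greedyLen L s := by
  apply le_foldr_max
  simp only [List.mem_filter, List.mem_range]
  exact ⟨by omega, by simpa using h2⟩

lemma sum_take_greedyLen (L : ℕ) (s : List ℕ) : (s.take (greedyLen L s)).sum ≤ L := by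
  rcases foldr_max_mem_or ((List.range (s.length + 1)).filter (fun j => (s.take j).sum ≤ L)) with h | h
  · rw [greedyLen, h]; simp
  · rw [greedyLen]
    have := List.of_mem_filter h
    simpa using this

/-- one greedy step from a later position reaches at least as far -/
lemma step_mono {L₀ L : ℕ} (s : List ℕ) (hL : L₀ ≤ L)
    {k₀ k : ℕ} (hk : k₀ ≤ k) :
    k₀ + max 1 (greedyLen L₀ (s.drop k₀)) ≤ k + max 1 (greedyLen L (s.drop k)) := by
  set g₀ := greedyLen L₀ (s.drop k₀) with hg₀
  have h1 : 1 ≤ max 1 (greedyLen L (s.drop k)) := le_max_left _ _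
  by_cases h : k₀ + max 1 g₀ ≤ k + 1
  · omega
  · have hg2 : 2 ≤ g₀ := by omega
    have hmx : max 1 g₀ = g₀ := by omega
    have hlen₀ : g₀ ≤ s.length - k₀ := by
      have := greedyLen_le_length L₀ (s.drop k₀); simpa using this
    set j := k₀ + g₀ - k with hj
    have hjlen : j ≤ (s.drop k).length := by simp [List.length_drop]; omega
    have hid : (s.drop k).take j = ((s.drop k₀).take g₀).drop (k - k₀) := by
      rw [List.drop_take, List.drop_drop]
      congr 1
      · omega
      · congr 1; omega
    have hsum : ((s.drop k).take j).sum ≤ L := by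
      rw [hid]
      calc (((s.drop k₀).take g₀).drop (k - k₀)).sum
          ≤ ((s.drop k₀).take g₀).sum := by
            conv_rhs => rw [← List.take_append_drop (k - k₀) ((s.drop k₀).take g₀)]
            rw [List.sum_append]; omega
        _ ≤ L₀ := sum_take_greedyLen L₀ (s.drop k₀)
        _ ≤ L := hL
    have hjg : j ≤ greedyLen L (s.drop k) := le_greedyLen hjlen hsum
    omega

lemma posN_mono {L₀ L : ℕ} (s : List ℕ) (hL : L₀ ≤ L) (n : ℕ) :
    posN L₀ s n ≤ posN L s n := by
  induction n with
  | zero => simp [posN]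
  | succ n ih =>
    rw [posN, posN]
    exact step_mono s hL ih

lemma scan_aux (L : ℕ) : ∀ m : ℕ, ∀ s : List ℕ, s.length ≤ m →
    (∀ i, (((scanGroups L s).take i).map List.length).sum = min (posN L s i) s.length) ∧
    (∀ n, (scanGroups L s).length ≤ n ↔ s.length ≤ posN L s n) := by
  intro m
  induction m with
  | zero =>
    intro s hs
    have : s = [] := List.eq_nil_of_length_eq_zero (by omega)
    subst this
    constructor
    · intro i; simp [scanGroups]
    · intro n; simp [scanGroups]
  | succ m ih =>
    intro s hs
    match s with
    | [] =>
      constructor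
      · intro i; simp [scanGroups]
      · intro n; simp [scanGroups]
    | a :: t =>
      set k := max 1 (greedyLen L (a :: t)) with hkdef
      have hk1 : 1 ≤ k := le_max_left _ _
      have hkle : k ≤ (a :: t).length := by
        have := greedyLen_le_length L (a :: t)
        simp only [List.length_cons] at *
        omega
      set s' := (a :: t).drop k with hs'def
      have hs'len : s'.length = (a :: t).length - k := by simp [hs'def]
      have hs'm : s'.length ≤ m := by
        simp only [List.length_cons] at *
        omega
      obtain ⟨ihsum, ihlen⟩ := ih s' hs'm
      have hunfold : scanGroups L (a :: t) = (a :: t).take k :: scanGroups L s' := by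
        rw [scanGroups]
      constructor
      · intro i
        cases i with
        | zero => simp [posN]
        | succ i =>
          rw [hunfold, List.take_succ_cons, List.map_cons, List.sum_cons, ihsum i,
            posN_succ_shift, ← hkdef, ← hs'def]
          have htk : ((a :: t).take k).length = k := by
            rw [List.length_take]; omega
          rw [htk]
          simp only [List.length_cons] at *
          omega
      · intro n
        cases n with
        | zero =>
          rw [hunfold]
          simp only [List.length_cons, posN]
          constructor <;> intro h <;> omega
        | succ n =>
          rw [hunfold, posN_succ_shift, ← hkdef, ← hs'def]
          simp only [List.length_cons] at *
          constructor
          · intro h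
            have := (ihlen n).mp (by omega)
            omega
          · intro h
            have := (ihlen n).mpr (by omega)
            omega

/-- If the scanning algorithm succeeds with bound `L₀ ≥ max_i sᵢ` using at most `r` groups,
then for every `L ≥ L₀` it also succeeds with at most `r` groups; moreover, for every `i`,
the first `i` groups formed with bound `L` contain at least as many buckets as the first
`i` groups formed with bound `L₀`. -/
theorem scanning_monotone_in_bound
    (s : List ℕ) (r L₀ : ℕ) (hmax : ∀ x ∈ s, x ≤ L₀)
    (hsucc : (scanGroups L₀ s).length ≤ r)
    (L : ℕ) (hL : L₀ ≤ L) :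
    (scanGroups L s).length ≤ r ∧
      ∀ i : ℕ,
        (((scanGroups L₀ s).take i).map List.length).sum ≤
          (((scanGroups L s).take i).map List.length).sum := by
  obtain ⟨sum0, len0⟩ := scan_aux L₀ s.length s le_rfl
  obtain ⟨sumL, lenL⟩ := scan_aux L s.length s le_rfl
  have hmono := posN_mono s hL
  constructor
  · exact (lenL r).mpr (le_trans ((len0 r).mp hsucc) (hmono r))
  · intro i
    rw [sum0 i, sumL i]
    have := hmono i
    omega
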